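/- arXiv:2109.05454 — 2 statements merged into one kernel-verified Lean document; each statement's English description precedes it below -/
import Mathlib

section
/- For the complete elliptic integrals K(k) and E(k), with complementary modulus k' = √(1-k²), and all k ∈ (0,1): E(k) - k' K(k) > 0. -/
/-- The complete elliptic integral of the first kind. -/
noncomputable def Kell (k : ℝ) : ℝ :=
  ∫ θ in (0:ℝ)..(Real.pi/2), 1 / Real.sqrt (1 - k^2 * Real.sin θ ^ 2)

/-- The complete elliptic integral of the second kind. -/
noncomputable def Eell (k : ℝ) : ℝ :=
  ∫ θ in (0:ℝ)..(Real.pi/2), Real.sqrt (1 - k^2 * Real.sin θ ^ 2)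

/-- E(k) - k' K(k) > 0 for k ∈ (0,1). -/
theorem E_sub_kp_K_pos : ∀ k ∈ Set.Ioo (0:ℝ) 1, Eell k - Real.sqrt (1 - k^2) * Kell k > 0 := by
  rintro k ⟨hk0, hk1⟩
  have hk2 : k ^ 2 < 1 := by nlinarith
  set k' : ℝ := Real.sqrt (1 - k ^ 2) with hk'def
  have hk'0 : 0 ≤ k' := Real.sqrt_nonneg _
  have hΔ : ∀ θ : ℝ, 0 < 1 - k ^ 2 * Real.sin θ ^ 2 := by
    intro θ
    nlinarith [Real.sin_sq_le_one θ, sq_nonneg k,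
      mul_le_mul_of_nonneg_left (Real.sin_sq_le_one θ) (sq_nonneg k)]
  set F : ℝ → ℝ := fun θ =>
    Real.sqrt (1 - k ^ 2 * Real.sin θ ^ 2) -
      k' * (1 / Real.sqrt (1 - k ^ 2 * Real.sin θ ^ 2)) with hFdef
  have hΔcont : Continuous fun θ : ℝ => Real.sqrt (1 - k ^ 2 * Real.sin θ ^ 2) :=
    (continuous_const.sub (continuous_const.mul (Real.continuous_sin.pow 2))).sqrt
  have hΔne : ∀ θ : ℝ, Real.sqrt (1 - k ^ 2 * Real.sin θ ^ 2) ≠ 0 := fun θ =>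
    ne_of_gt (Real.sqrt_pos.2 (hΔ θ))
  have hinvcont : Continuous fun θ : ℝ => 1 / Real.sqrt (1 - k ^ 2 * Real.sin θ ^ 2) :=
    continuous_const.div hΔcont hΔne
  have hFcont : Continuous F := hΔcont.sub (continuous_const.mul hinvcont)
  have key : Eell k - k' * Kell k = ∫ θ in (0:ℝ)..(Real.pi/2), F θ := by
    unfold Eell Kell
    rw [← intervalIntegral.integral_const_mul, ← intervalIntegral.integral_sub
      (g := fun θ : ℝ => k' * (1 / Real.sqrt (1 - k ^ 2 * Real.sin θ ^ 2)))
      (hΔcont.intervalIntegrable _ _) ((continuous_const.mul hinvcont).intervalIntegrable _ _)]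
  have hrefl : (∫ θ in (0:ℝ)..(Real.pi/2), F (Real.pi/2 - θ)) =
      ∫ θ in (0:ℝ)..(Real.pi/2), F θ := by
    simpa using intervalIntegral.integral_comp_sub_left (a := 0) (b := Real.pi/2) F (Real.pi/2)
  have hFcomp : Continuous fun θ : ℝ => F (Real.pi/2 - θ) :=
    hFcont.comp (continuous_const.sub continuous_id)
  have h2 : 2 * (Eell k - k' * Kell k) =
      ∫ θ in (0:ℝ)..(Real.pi/2), (F θ + F (Real.pi/2 - θ)) := by
    rw [intervalIntegral.integral_add (hFcont.intervalIntegrable _ _)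
      (hFcomp.intervalIntegrable _ _), hrefl, key]
    ring
  have hpos : 0 < ∫ θ in (0:ℝ)..(Real.pi/2), (F θ + F (Real.pi/2 - θ)) := by
    apply intervalIntegral.intervalIntegral_pos_of_pos_on
    · exact (hFcont.add hFcomp).intervalIntegrable _ _
    · intro θ hθ
      obtain ⟨hθ0, hθ1⟩ := hθ
      have hs : 0 < Real.sin θ := Real.sin_pos_of_pos_of_lt_pi hθ0
        (hθ1.trans (by linarith [Real.pi_pos]))
      have hc : 0 < Real.cos θ := Real.cos_pos_of_mem_Ioo ⟨by linarith [Real.pi_pos], hθ1⟩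
      have hsc : Real.sin (Real.pi/2 - θ) = Real.cos θ := Real.sin_pi_div_two_sub θ
      set a : ℝ := Real.sqrt (1 - k ^ 2 * Real.sin θ ^ 2) with hadef
      set b : ℝ := Real.sqrt (1 - k ^ 2 * Real.cos θ ^ 2) with hbdef
      have ha : 0 < a := Real.sqrt_pos.2 (hΔ θ)
      have hb : 0 < b := by
        apply Real.sqrt_pos.2
        nlinarith [Real.cos_sq_le_one θ, sq_nonneg k,
          mul_le_mul_of_nonneg_left (Real.cos_sq_le_one θ) (sq_nonneg k)]
      have habk : k' < a * b := by
        rw [hadef, hbdef, ← Real.sqrt_mul (le_of_lt (hΔ θ))]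
        apply Real.sqrt_lt_sqrt (by linarith)
        have pyth := Real.sin_sq_add_cos_sq θ
        have h4 : 0 < k ^ 4 * Real.sin θ ^ 2 * Real.cos θ ^ 2 := by positivity
        nlinarith [pyth, h4]
      have hFθ : F θ = a - k' * (1 / a) := rfl
      have hFθ' : F (Real.pi/2 - θ) = b - k' * (1 / b) := by
        simp only [hFdef, hsc, hbdef]
      rw [hFθ, hFθ']
      have expand : a - k' * (1 / a) + (b - k' * (1 / b)) =
          (a + b) * (a * b - k') / (a * b) := by
        field_simp
        ring
      rw [expand]
      exact div_pos (mul_pos (by linarith) (by linarith)) (mul_pos ha hb)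
    · positivity
  linarith
end

section
/- For the complete elliptic integrals K(k) and E(k), with k' = √(1-k²), and all k ∈ (0,1): (1 + k'²) K(k) - 2 E(k) > 0. -/
/-!
Write `Δ(θ) = √(1 - k² sin² θ)` and `Δ'(θ) = Δ(π/2 - θ)`. Since `Δ² + Δ'² = 2 - k²`, the integrand of
`(2 - k²) K - 2 E` is `(Δ'² - Δ²) / Δ`. Averaging it with its reflection under `θ ↦ π/2 - θ` gives
`(Δ + Δ') (Δ - Δ')² / (2 Δ Δ')`, which is nonnegative, and positive at `θ = 0`, where
`Δ = 1 > √(1 - k²) = Δ'`.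
-/

open Real intervalIntegral

theorem intervalIntegral.integral_add_comp_add_sub {E : Type*} [NormedAddCommGroup E]
    [NormedSpace ℝ E] {f : ℝ → E} {a b : ℝ} (hf : IntervalIntegrable f MeasureTheory.volume a b) :
    ∫ x in a..b, (f x + f (a + b - x)) = (2 : ℝ) • ∫ x in a..b, f x := by
  have hf' : IntervalIntegrable (fun x => f (a + b - x)) MeasureTheory.volume a b := by
    simpa using hf.symm.comp_sub_left (a + b)
  rw [integral_add hf hf', integral_comp_sub_left, two_smul]
  simp

noncomputable def ellipticDelta (k θ : ℝ) : ℝ :=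
  √(1 - k ^ 2 * sin θ ^ 2)

section ellipticDelta

variable {k : ℝ}

@[fun_prop]
theorem continuous_ellipticDelta (k : ℝ) : Continuous (ellipticDelta k) := by
  unfold ellipticDelta
  fun_prop

theorem ellipticDelta_pos (hk : k ^ 2 < 1) (θ : ℝ) : 0 < ellipticDelta k θ :=
  sqrt_pos.2 <| by nlinarith [sin_sq_le_one θ, sq_nonneg (sin θ)]

theorem ellipticDelta_zero (k : ℝ) : ellipticDelta k 0 = 1 := by
  simp [ellipticDelta]

theorem ellipticDelta_pi_div_two (k : ℝ) : ellipticDelta k (π / 2) = √(1 - k ^ 2) := by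
  simp [ellipticDelta]

theorem ellipticDelta_sq_add_ellipticDelta_pi_div_two_sub_sq (hk : k ^ 2 ≤ 1) (θ : ℝ) :
    ellipticDelta k θ ^ 2 + ellipticDelta k (π / 2 - θ) ^ 2 = 2 - k ^ 2 := by
  unfold ellipticDelta
  rw [sin_pi_div_two_sub, sq_sqrt, sq_sqrt]
  · linear_combination (-k ^ 2) * sin_sq_add_cos_sq θ
  all_goals nlinarith [sin_sq_le_one θ, cos_sq_le_one θ]

noncomputable def ellipticDefect (k θ : ℝ) : ℝ :=
  (2 - k ^ 2) / ellipticDelta k θ - 2 * ellipticDelta k θ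

theorem continuous_ellipticDefect (hk : k ^ 2 < 1) : Continuous (ellipticDefect k) :=
  (continuous_const.div (continuous_ellipticDelta k) fun θ => (ellipticDelta_pos hk θ).ne').sub
    (by fun_prop)

theorem two_sub_sq_mul_Kell_sub_two_mul_Eell (hk : k ^ 2 < 1) :
    (2 - k ^ 2) * Kell k - 2 * Eell k = ∫ θ in (0)..(π / 2), ellipticDefect k θ := by
  have hΔ := continuous_ellipticDelta k
  have hΔinv : Continuous fun θ => 1 / ellipticDelta k θ :=
    continuous_const.div hΔ fun θ => (ellipticDelta_pos hk θ).ne'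
  simp only [ellipticDefect, div_eq_mul_one_div (2 - k ^ 2)]
  rw [integral_sub ((hΔinv.const_mul _).intervalIntegrable _ _)
    ((hΔ.const_mul _).intervalIntegrable _ _), integral_const_mul, integral_const_mul]
  rfl

theorem ellipticDefect_add_ellipticDefect_pi_div_two_sub (hk : k ^ 2 < 1) (θ : ℝ) :
    ellipticDefect k θ + ellipticDefect k (π / 2 - θ) =
      (ellipticDelta k θ + ellipticDelta k (π / 2 - θ)) *
          (ellipticDelta k θ - ellipticDelta k (π / 2 - θ)) ^ 2 /
        (ellipticDelta k θ * ellipticDelta k (π / 2 - θ)) := by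
  unfold ellipticDefect
  rw [← ellipticDelta_sq_add_ellipticDelta_pi_div_two_sub_sq hk.le θ]
  have hA := (ellipticDelta_pos hk θ).ne'
  have hB := (ellipticDelta_pos hk (π / 2 - θ)).ne'
  generalize ellipticDelta k θ = A at *
  generalize ellipticDelta k (π / 2 - θ) = B at *
  field_simp
  ring

theorem ellipticDefect_add_ellipticDefect_pi_div_two_sub_nonneg (hk : k ^ 2 < 1) (θ : ℝ) :
    0 ≤ ellipticDefect k θ + ellipticDefect k (π / 2 - θ) := by
  have hA := ellipticDelta_pos hk θ
  have hB := ellipticDelta_pos hk (π / 2 - θ)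
  rw [ellipticDefect_add_ellipticDefect_pi_div_two_sub hk]
  positivity

theorem ellipticDefect_zero_add_ellipticDefect_pi_div_two_pos (hk₀ : k ≠ 0) (hk : k ^ 2 < 1) :
    0 < ellipticDefect k 0 + ellipticDefect k (π / 2) := by
  have hA := ellipticDelta_pos hk 0
  have hB := ellipticDelta_pos hk (π / 2)
  have hBA : ellipticDelta k (π / 2) < ellipticDelta k 0 := by
    rw [ellipticDelta_pi_div_two, ellipticDelta_zero, sqrt_lt' one_pos]
    linarith [sq_pos_of_ne_zero hk₀]
  have hpair := ellipticDefect_add_ellipticDefect_pi_div_two_sub hk 0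
  rw [sub_zero] at hpair
  rw [hpair]
  have := sub_pos.2 hBA
  positivity

end ellipticDelta

/-- (1 + k'²) K(k) - 2E(k) > 0 for k ∈ (0,1). -/
theorem one_add_kp_sq_K_sub_two_E_pos : ∀ k ∈ Set.Ioo (0:ℝ) 1, (1 + (1 - k^2)) * Kell k - 2 * Eell k > 0 := by
  rintro k ⟨hk0, hk1⟩
  have hk : k ^ 2 < 1 := by nlinarith
  have hD := continuous_ellipticDefect hk
  suffices 0 < 2 * ((2 - k ^ 2) * Kell k - 2 * Eell k) by linarith
  rw [two_sub_sq_mul_Kell_sub_two_mul_Eell hk, ← smul_eq_mul,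
    ← integral_add_comp_add_sub (hD.intervalIntegrable _ _)]
  simp only [zero_add]
  exact integral_pos (by positivity) (hD.add (hD.comp (by fun_prop))).continuousOn
    (fun θ _ => ellipticDefect_add_ellipticDefect_pi_div_two_sub_nonneg hk θ)
    ⟨0, ⟨le_rfl, by positivity⟩,
      by simpa using ellipticDefect_zero_add_ellipticDefect_pi_div_two_pos hk0.ne' hk⟩
end
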